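/- Let D ⊂ G^{[0,1]} be the set of functions h : [0,1] → G that are nowhere continuous. Then the complement G^{[0,1]} − D, i.e., the set of functions that are continuous at at least one point of [0,1], is contained in a measurable set of ν-measure zero, where ν is the product of Haar probability measures. -/

import Mathlib

/-!
Cover `G` by finitely many open sets `V` of Haar measure `< 1`. If `h` is continuous at `t`
with `h t ∈ V`, then `h` maps a whole basic open set `W ∋ t` into `V`, in particular the
infinitely many points of a fixed countable dense set lying in `W`. For a fixed pair `(V, W)`
this event has measure at most `μ₀ V ^ n` for every `n`, hence measure zero, and there are
only countably many pairs.
-/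

open MeasureTheory Filter Topology TopologicalSpace Set

theorem exists_isOpen_mem_measure_lt_one {X : Type*} [TopologicalSpace X] [T2Space X]
    [Nontrivial X] [MeasurableSpace X] [OpensMeasurableSpace X] (μ : Measure X)
    [IsProbabilityMeasure μ] [μ.IsOpenPosMeasure] (x : X) :
    ∃ V : Set X, IsOpen V ∧ x ∈ V ∧ μ V < 1 := by
  obtain ⟨y, hyx⟩ := exists_ne x
  obtain ⟨U, V, hU, hV, hxU, hyV, hUV⟩ := t2_separation hyx.symm
  refine ⟨U, hU, hxU, ?_⟩
  calc μ U ≤ μ Vᶜ := measure_mono hUV.subset_compl_right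
    _ = 1 - μ V := prob_compl_eq_one_sub hV.measurableSet
    _ < 1 := ENNReal.sub_lt_self ENNReal.one_ne_top one_ne_zero (hV.measure_ne_zero μ ⟨y, hyV⟩)

theorem Dense.infinite_inter_of_isOpen {I : Type*} [TopologicalSpace I] [T1Space I]
    [∀ t : I, NeBot (𝓝[≠] t)] {T W : Set I} (hT : Dense T) (hW : IsOpen W)
    (hWne : W.Nonempty) : (W ∩ T).Infinite := by
  intro hfin
  obtain ⟨t, htW, htT, htWT⟩ := (hT.sdiff_finite hfin).inter_open_nonempty W hW hWne
  exact htWT ⟨htW, htT⟩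

theorem measure_pi_const_eq_zero_of_infinite {ι X : Type*} [MeasurableSpace X]
    [MeasurableSpace (ι → X)] {μ : Measure X} {ν : Measure (ι → X)}
    (hν : ∀ (s : Finset ι) (B : ι → Set X), (∀ i ∈ s, MeasurableSet (B i)) →
      ν ((s : Set ι).pi B) = ∏ i ∈ s, μ (B i))
    {S : Set ι} (hS : S.Infinite) {V : Set X} (hV : MeasurableSet V) (hμV : μ V < 1) :
    ν (S.pi fun _ ↦ V) = 0 := by
  refine le_antisymm
    (ge_of_tendsto' (ENNReal.tendsto_pow_atTop_nhds_zero_of_lt_one hμV) fun n ↦ ?_) bot_le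
  obtain ⟨F, hFS, rfl⟩ := hS.exists_subset_card_eq n
  calc ν (S.pi fun _ ↦ V) ≤ ν ((F : Set ι).pi fun _ ↦ V) :=
        measure_mono fun h hh i hi ↦ hh i (hFS hi)
    _ = μ V ^ F.card := by rw [hν F _ fun _ _ ↦ hV, Finset.prod_const]

theorem exists_measurableSet_measure_eq_zero_setOf_continuousAt_subset {I X : Type*}
    [TopologicalSpace I] [SecondCountableTopology I] [T1Space I] [∀ t : I, NeBot (𝓝[≠] t)]
    [TopologicalSpace X] [CompactSpace X] [T2Space X] [Nontrivial X] [MeasurableSpace X]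
    [OpensMeasurableSpace X] (μ : Measure X) [IsProbabilityMeasure μ] [μ.IsOpenPosMeasure]
    (ν : Measure (I → X))
    (hν : ∀ (s : Finset I) (B : I → Set X), (∀ i ∈ s, MeasurableSet (B i)) →
      ν ((s : Set I).pi B) = ∏ i ∈ s, μ (B i)) :
    ∃ N : Set (I → X), MeasurableSet N ∧ ν N = 0 ∧ {h | ∃ t, ContinuousAt h t} ⊆ N := by
  choose V hVo hxV hμV using exists_isOpen_mem_measure_lt_one μ
  obtain ⟨s, hs⟩ := isCompact_univ.elim_finite_subcover V hVo fun x _ ↦ mem_iUnion.2 ⟨x, hxV x⟩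
  obtain ⟨T, hTc, hTd⟩ := exists_countable_dense I
  set 𝓑 := {W ∈ countableBasis I | W.Nonempty}
  have h𝓑 : 𝓑.Countable := (countable_countableBasis I).mono (sep_subset _ _)
  refine ⟨⋃ x ∈ s, ⋃ W ∈ 𝓑, (W ∩ T).pi fun _ ↦ V x, ?_, ?_, ?_⟩
  · exact .biUnion s.countable_toSet fun x _ ↦ .biUnion h𝓑 fun W _ ↦
      .pi (hTc.mono inter_subset_right) fun _ _ ↦ (hVo x).measurableSet
  · refine (measure_biUnion_null_iff s.countable_toSet).2 fun x _ ↦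
      (measure_biUnion_null_iff h𝓑).2 fun W hW ↦ ?_
    exact measure_pi_const_eq_zero_of_infinite hν
      (hTd.infinite_inter_of_isOpen (isOpen_of_mem_countableBasis hW.1) hW.2)
      (hVo x).measurableSet (hμV x)
  · rintro h ⟨t, ht⟩
    obtain ⟨x, hxs, htx⟩ := mem_iUnion₂.1 (hs (mem_univ (h t)))
    obtain ⟨W, hW, htW, hWV⟩ := (isBasis_countableBasis I).mem_nhds_iff.1
      (ht.preimage_mem_nhds ((hVo x).mem_nhds htx))
    exact mem_iUnion₂.2 ⟨x, hxs, mem_iUnion₂.2 ⟨W, ⟨hW, t, htW⟩, fun i hi ↦ hWV hi.1⟩⟩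

theorem compl_nowhere_continuous_contained_in_null_general {G : Type*} [Group G]
    [TopologicalSpace G] [CompactSpace G] [T2Space G]
    [Nontrivial G] [MeasurableSpace G] [BorelSpace G]
    (μ₀ : Measure G) [μ₀.IsHaarMeasure] [IsProbabilityMeasure μ₀]
    (ν : Measure (Set.Icc (0 : ℝ) 1 → G))
    (hν : ∀ (s : Finset (Set.Icc (0 : ℝ) 1)) (B : Set.Icc (0 : ℝ) 1 → Set G),
      (∀ i ∈ s, MeasurableSet (B i)) →
      ν {h : Set.Icc (0 : ℝ) 1 → G | ∀ i ∈ s, h i ∈ B i} = ∏ i ∈ s, μ₀ (B i))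
    (D : Set (Set.Icc (0 : ℝ) 1 → G))
    (hD : D = {h : Set.Icc (0 : ℝ) 1 → G | ∀ t, ¬ ContinuousAt h t}) :
    ∃ N : Set (Set.Icc (0 : ℝ) 1 → G), MeasurableSet N ∧ ν N = 0 ∧ Dᶜ ⊆ N := by
  obtain ⟨N, hN, hνN, hcont⟩ :=
    exists_measurableSet_measure_eq_zero_setOf_continuousAt_subset μ₀ ν hν
  refine ⟨N, hN, hνN, fun h hh ↦ hcont ?_⟩
  simpa only [hD, mem_compl_iff, mem_ofPred_eq, not_forall, not_not] using hh

/-- Let `G` be a compact Hausdorff second countable topological group with more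
than one element, `μ₀` its normalized Haar probability measure, and `ν` the
infinite product measure on `G^[0,1]` (an independent copy of `μ₀` at each
point of `[0,1]`, characterized by its values on cylinder sets). Let
`D ⊆ G^[0,1]` be the set of nowhere continuous functions. Then the complement
`G^[0,1] − D`, i.e. the set of functions continuous at at least one point of
`[0,1]`, is contained in a measurable set of `ν`-measure zero. -/
theorem compl_nowhere_continuous_contained_in_null {G : Type*} [Group G]
    [TopologicalSpace G] [IsTopologicalGroup G] [CompactSpace G] [T2Space G]
    [SecondCountableTopology G] [Nontrivial G] [MeasurableSpace G] [BorelSpace G]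
    (μ₀ : Measure G) [μ₀.IsHaarMeasure] [IsProbabilityMeasure μ₀]
    (ν : Measure (Set.Icc (0 : ℝ) 1 → G))
    (hν : ∀ (s : Finset (Set.Icc (0 : ℝ) 1)) (B : Set.Icc (0 : ℝ) 1 → Set G),
      (∀ i ∈ s, MeasurableSet (B i)) →
      ν {h : Set.Icc (0 : ℝ) 1 → G | ∀ i ∈ s, h i ∈ B i} = ∏ i ∈ s, μ₀ (B i))
    (D : Set (Set.Icc (0 : ℝ) 1 → G))
    (hD : D = {h : Set.Icc (0 : ℝ) 1 → G | ∀ t, ¬ ContinuousAt h t}) :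
    ∃ N : Set (Set.Icc (0 : ℝ) 1 → G), MeasurableSet N ∧ ν N = 0 ∧ Dᶜ ⊆ N :=
  compl_nowhere_continuous_contained_in_null_general μ₀ ν hν D hD
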